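/- arXiv:2010.05251 — 3 statements merged into one kernel-verified Lean document; each statement's English description precedes it below -/
import Mathlib

section
/- Let μ ∈ [0,1), and suppose a sequence (x_i) in ℝ satisfies x_i = 1 for all i. Let θ_T ∈ ℝ, and let a ∈ [0,1], v_in, v_out : ℕ → [-1/2, 1/2]. For j ≥ 1 define θ(j;a) = [Σ_{i=0}^{j-1} μ^{j-i-1}(1 + a v_in(i))(θ_T + a v_out(i))] / [Σ_{i=0}^{j-1} μ^{j-i-1}(1 + a v_in(i))²]. Then the denominator satisfies Σ_{i=0}^{j-1} μ^{j-i-1}(1 + a v_in(i))² ≥ 1/4, and |θ(j;a) - θ_T| ≤ 3(|θ_T|+1)(1-μ)⁻¹ · a. -/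
/-!
Both bounds come from the observation that `|a v| ≤ 1/2` keeps every factor `1 + a v_in(i)`
inside `[1/2, 3/2]`. The last summand of the denominator has weight `μ⁰ = 1`, so the
denominator is at least `1/4`. The numerator minus `θ_T` times the denominator is
`∑ μ^(j-i-1) (1 + a v_in(i)) a (v_out(i) - θ_T v_in(i))`, each term of which is at most
`(3/4)(|θ_T| + 1) a μ^(j-i-1)`; the geometric weights sum to at most `(1 - μ)⁻¹`.
-/

open Finset

lemma abs_mul_le_half {a v : ℝ} (ha : |a| ≤ 1) (hv : |v| ≤ 1 / 2) : |a * v| ≤ 1 / 2 := by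
  rw [abs_mul]
  nlinarith [abs_nonneg a, abs_nonneg v]

lemma one_div_four_le_sq_one_add_mul {a v : ℝ} (ha : |a| ≤ 1) (hv : |v| ≤ 1 / 2) :
    1 / 4 ≤ (1 + a * v) ^ 2 := by
  have := (abs_le.mp (abs_mul_le_half ha hv)).1
  nlinarith

lemma abs_one_add_mul_le {a v : ℝ} (ha : |a| ≤ 1) (hv : |v| ≤ 1 / 2) :
    |1 + a * v| ≤ 3 / 2 :=
  (abs_add_le _ _).trans (by rw [abs_one]; linarith [abs_mul_le_half ha hv])

lemma abs_sub_mul_le {θ u v : ℝ} (hu : |u| ≤ 1 / 2) (hv : |v| ≤ 1 / 2) :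
    |u - θ * v| ≤ (|θ| + 1) / 2 := by
  calc |u - θ * v| ≤ |u| + |θ| * |v| := by rw [← abs_mul]; exact abs_sub _ _
    _ ≤ 1 / 2 + |θ| * (1 / 2) := by gcongr
    _ = (|θ| + 1) / 2 := by ring

lemma sum_range_pow_sub_sub_one_le_inv {μ : ℝ} (hμ0 : 0 ≤ μ) (hμ1 : μ < 1) (j : ℕ) :
    ∑ i ∈ range j, μ ^ (j - i - 1) ≤ (1 - μ)⁻¹ := by
  calc ∑ i ∈ range j, μ ^ (j - i - 1) = ∑ i ∈ range j, μ ^ i := by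
        simp_rw [Nat.sub_right_comm j _ 1]
        exact sum_range_reflect (μ ^ ·) j
    _ ≤ (1 - μ)⁻¹ := by
        simpa using geom_sum_Ico_le_of_lt_one (m := 0) (n := j) hμ0 hμ1

lemma abs_weighted_sum_sub_mul_le {ι : Type*} (s : Finset ι) (w : ι → ℝ)
    (hw : ∀ i ∈ s, 0 ≤ w i)
    (θ : ℝ) {a : ℝ} (ha0 : 0 ≤ a) (ha1 : a ≤ 1) (v u : ι → ℝ)
    (hv : ∀ i ∈ s, |v i| ≤ 1 / 2) (hu : ∀ i ∈ s, |u i| ≤ 1 / 2) :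
    |∑ i ∈ s, w i * (1 + a * v i) * (θ + a * u i) - θ * ∑ i ∈ s, w i * (1 + a * v i) ^ 2|
      ≤ 3 / 4 * (|θ| + 1) * a * ∑ i ∈ s, w i := by
  have haabs : |a| ≤ 1 := abs_le.mpr ⟨by linarith, ha1⟩
  have hsplit : ∑ i ∈ s, w i * (1 + a * v i) * (θ + a * u i)
      - θ * ∑ i ∈ s, w i * (1 + a * v i) ^ 2
      = ∑ i ∈ s, w i * (1 + a * v i) * (a * (u i - θ * v i)) := by
    rw [mul_sum, ← sum_sub_distrib]
    exact sum_congr rfl fun i _ => by ring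
  rw [hsplit, mul_sum]
  refine (abs_sum_le_sum_abs _ _).trans (sum_le_sum fun i hi => ?_)
  calc |w i * (1 + a * v i) * (a * (u i - θ * v i))|
      = w i * |1 + a * v i| * (a * |u i - θ * v i|) := by
        rw [abs_mul, abs_mul, abs_mul, abs_of_nonneg (hw i hi), abs_of_nonneg ha0]
    _ ≤ w i * (3 / 2) * (a * ((|θ| + 1) / 2)) := by
        have := hw i hi
        gcongr
        · exact abs_one_add_mul_le haabs (hv i hi)
        · exact abs_sub_mul_le (hu i hi) (hv i hi)
    _ = 3 / 4 * (|θ| + 1) * a * w i := by ring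

lemma abs_div_sub_le_of_one_div_four_le {N D θ : ℝ} (hD : 1 / 4 ≤ D) :
    |N / D - θ| ≤ 4 * |N - θ * D| := by
  have hDpos : 0 < D := by linarith
  rw [div_sub' hDpos.ne', abs_div, abs_of_pos hDpos, div_le_iff₀ hDpos, mul_comm θ D]
  nlinarith [abs_nonneg (N - D * θ)]

/-- bias bound for the scalar least-squares estimate with
errors-in-variables (Example 1 of the paper). -/
theorem stmt_4 (μ : ℝ) (hμ0 : 0 ≤ μ) (hμ1 : μ < 1)
    (θT : ℝ) (a : ℝ) (ha : a ∈ Set.Icc (0:ℝ) 1)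
    (vin vout : ℕ → ℝ)
    (hvin : ∀ i, vin i ∈ Set.Icc (-(1/2) : ℝ) (1/2))
    (hvout : ∀ i, vout i ∈ Set.Icc (-(1/2) : ℝ) (1/2))
    (j : ℕ) (hj : 1 ≤ j) :
    ((1:ℝ)/4 ≤ ∑ i ∈ Finset.range j, μ ^ (j - i - 1) * (1 + a * vin i) ^ 2) ∧
    |(∑ i ∈ Finset.range j, μ ^ (j - i - 1) * (1 + a * vin i) * (θT + a * vout i)) /
        (∑ i ∈ Finset.range j, μ ^ (j - i - 1) * (1 + a * vin i) ^ 2) - θT|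
      ≤ 3 * (|θT| + 1) * (1 - μ)⁻¹ * a := by
  obtain ⟨ha0, ha1⟩ := ha
  have hvin' : ∀ i, |vin i| ≤ 1 / 2 := fun i => abs_le.mpr (hvin i)
  have hw : ∀ i ∈ range j, 0 ≤ μ ^ (j - i - 1) := fun i _ => pow_nonneg hμ0 _
  have hD : (1:ℝ)/4 ≤ ∑ i ∈ range j, μ ^ (j - i - 1) * (1 + a * vin i) ^ 2 := by
    have hlast : j - (j - 1) - 1 = 0 := by omega
    calc (1:ℝ)/4 ≤ μ ^ (j - (j - 1) - 1) * (1 + a * vin (j - 1)) ^ 2 := by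
          rw [hlast, pow_zero, one_mul]
          exact one_div_four_le_sq_one_add_mul (abs_le.mpr ⟨by linarith, ha1⟩) (hvin' _)
      _ ≤ _ := single_le_sum (f := fun i => μ ^ (j - i - 1) * (1 + a * vin i) ^ 2)
          (fun i hi => mul_nonneg (hw i hi) (sq_nonneg _)) (mem_range.mpr (by omega))
  refine ⟨hD, (abs_div_sub_le_of_one_div_four_le hD).trans ?_⟩
  have hnum := abs_weighted_sum_sub_mul_le (range j) _ hw θT ha0 ha1 vin vout
    (fun i _ => hvin' i) (fun i _ => abs_le.mpr (hvout i))
  have hgeom := sum_range_pow_sub_sub_one_le_inv hμ0 hμ1 j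
  calc _ ≤ 4 * (3 / 4 * (|θT| + 1) * a * ∑ i ∈ range j, μ ^ (j - i - 1)) := by gcongr
    _ ≤ 4 * (3 / 4 * (|θT| + 1) * a * (1 - μ)⁻¹) := by gcongr
    _ = 3 * (|θT| + 1) * (1 - μ)⁻¹ * a := by ring
end

section
/- Let A, R be p×p symmetric positive semidefinite real matrices and suppose the minimum nonzero singular value of A + R is at least ε > 0 uniformly over a set S of pairs (A, b) with b ∈ range(A+R) and |A| ≤ c₁, |b| ≤ c₂. Then the map (A, b) ↦ (A+R)⁺ b is Lipschitz on S ∩ {(A,b) : msv(A+R) ≥ ε}, with Lipschitz constant depending only on ε, c₁, c₂. -/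
/-!
Write `M = A + R`, `M' = A' + R`, `x = M⁺ b`, `x' = M'⁺ b'` and `y = M⁺ x`, and split `x - x'`
along the orthogonal projection `Q = M' M'⁺` onto the range of `M'`. Since `M' Q = M'`, the lower
bound `ε` on the range of `M'` gives `ε ‖Q (x - x')‖ ≤ ‖M' (x - x')‖ = ‖(b - b') - (M - M') x‖`.
Since `(1 - Q) M' = 0` and `Q x' = x'`, the other part is `(1 - Q) x = (1 - Q) (M - M') y`.
The lower bound on the range of `M` gives `‖x‖ ≤ ‖b‖ / ε` and `‖y‖ ≤ ‖b‖ / ε²`; the factors `p`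
come from comparing the entrywise sup norm of a matrix with its operator norm.
-/

open Matrix

attribute [local instance] Matrix.normedAddCommGroup

/-- The four Penrose conditions characterizing the Moore–Penrose pseudoinverse. -/
def IsMoorePenroseInv {p : ℕ} (A B : Matrix (Fin p) (Fin p) ℝ) : Prop :=
  A * B * A = A ∧ B * A * B = B ∧ (A * B)ᵀ = A * B ∧ (B * A)ᵀ = B * A

section EntrywiseNorm

variable {m n : Type*} [Fintype m] [Fintype n]

theorem Matrix.norm_mulVec_le_card_mul (M : Matrix m n ℝ) (v : n → ℝ) :
    ‖M *ᵥ v‖ ≤ Fintype.card n * ‖M‖ * ‖v‖ := by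
  refine (pi_norm_le_iff_of_nonneg (by positivity)).2 fun i => ?_
  calc ‖(M *ᵥ v) i‖ = ‖∑ j, M i j * v j‖ := rfl
    _ ≤ ∑ j, ‖M i j‖ * ‖v j‖ := (norm_sum_le _ _).trans_eq (by simp only [norm_mul])
    _ ≤ ∑ _j : n, ‖M‖ * ‖v‖ := by
        gcongr with j
        exacts [M.norm_entry_le_entrywise_sup_norm, norm_le_pi_norm v j]
    _ = Fintype.card n * ‖M‖ * ‖v‖ := by simp [mul_assoc]

theorem Matrix.norm_le_one_of_isSymm_of_isIdempotentElem {Q : Matrix n n ℝ} (hsymm : Q.IsSymm)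
    (hidem : IsIdempotentElem Q) : ‖Q‖ ≤ 1 := by
  have hQ : Qᵀ * Q = Q := by rw [hsymm.eq]; exact hidem.eq
  have diag_eq : ∀ j, Q j j = ∑ l, Q l j ^ 2 := fun j =>
    calc Q j j = (Qᵀ * Q) j j := by rw [hQ]
      _ = ∑ l, Q l j ^ 2 := by simp [mul_apply, sq]
  have entry_sq_le : ∀ i j, Q i j ^ 2 ≤ Q j j := fun i j => by
    rw [diag_eq j]
    exact Finset.single_le_sum (f := fun l => Q l j ^ 2) (fun l _ => sq_nonneg _)
      (Finset.mem_univ i)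
  refine (norm_le_iff zero_le_one).2 fun i j => ?_
  have hjj : Q j j ≤ 1 := by nlinarith [entry_sq_le j j]
  rw [Real.norm_eq_abs, abs_le_one_iff_mul_self_le_one]
  nlinarith [entry_sq_le i j]

end EntrywiseNorm

namespace IsMoorePenroseInv

variable {p : ℕ} {M P : Matrix (Fin p) (Fin p) ℝ}

theorem mulVec_mulVec_of_mem_range (hP : IsMoorePenroseInv M P) {b : Fin p → ℝ}
    (hb : b ∈ Set.range M.mulVec) : M *ᵥ (P *ᵥ b) = b := by
  obtain ⟨w, rfl⟩ := hb
  rw [mulVec_mulVec, mulVec_mulVec, hP.1]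

theorem mulVec_mem_range (hM : M.IsSymm) (hP : IsMoorePenroseInv M P) (v : Fin p → ℝ) :
    P *ᵥ v ∈ Set.range M.mulVec := by
  have hPM : P * M = M * Pᵀ := by rw [← hP.2.2.2, transpose_mul, hM.eq]
  refine ⟨Pᵀ *ᵥ (P *ᵥ v), ?_⟩
  rw [mulVec_mulVec, mulVec_mulVec, ← hPM, hP.2.1]

theorem isSymm_mul (hP : IsMoorePenroseInv M P) : (M * P).IsSymm := hP.2.2.1

theorem isIdempotentElem_mul (hP : IsMoorePenroseInv M P) : IsIdempotentElem (M * P) := by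
  rw [IsIdempotentElem, ← Matrix.mul_assoc, hP.1]

theorem mul_mul_self (hM : M.IsSymm) (hP : IsMoorePenroseInv M P) : M * (M * P) = M := by
  calc M * (M * P) = Mᵀ * (M * P)ᵀ := by rw [hM.eq, hP.isSymm_mul.eq]
    _ = M := by rw [← transpose_mul, hP.1, hM.eq]

theorem norm_one_sub_mul_mulVec_le (hP : IsMoorePenroseInv M P) (w : Fin p → ℝ) :
    ‖(1 - M * P) *ᵥ w‖ ≤ p * ‖w‖ := by
  have hQ : ‖1 - M * P‖ ≤ 1 := norm_le_one_of_isSymm_of_isIdempotentElem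
    (isSymm_one.sub hP.isSymm_mul) hP.isIdempotentElem_mul.one_sub
  calc ‖(1 - M * P) *ᵥ w‖ ≤ p * ‖1 - M * P‖ * ‖w‖ := by
        simpa using norm_mulVec_le_card_mul (1 - M * P) w
    _ ≤ p * 1 * ‖w‖ := by gcongr
    _ = p * ‖w‖ := by rw [mul_one]

theorem one_sub_mul_mulVec_sub (hM : M.IsSymm) (hP : IsMoorePenroseInv M P)
    (N : Matrix (Fin p) (Fin p) ℝ) (y v : Fin p → ℝ) :
    (1 - M * P) *ᵥ (N *ᵥ y - P *ᵥ v) = (1 - M * P) *ᵥ ((N - M) *ᵥ y) := by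
  have hQP : (M * P) *ᵥ (P *ᵥ v) = P *ᵥ v := by
    obtain ⟨w, hw⟩ := hP.mulVec_mem_range hM v
    rw [← hw, mulVec_mulVec, hP.1]
  have hQM : (1 - M * P) * M = 0 := by rw [sub_mul, one_mul, hP.1, sub_self]
  rw [mulVec_mulVec, Matrix.mul_sub, hQM, sub_zero, ← mulVec_mulVec,
    mulVec_sub, sub_mulVec 1 _ (P *ᵥ v), one_mulVec, hQP, sub_self, sub_zero]

variable {ε : ℝ} (hM : M.IsSymm) (hP : IsMoorePenroseInv M P)
  (hlow : ∀ v ∈ Set.range M.mulVec, ε * ‖v‖ ≤ ‖M *ᵥ v‖)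
include hM hP hlow

theorem mul_norm_mulVec_le {b : Fin p → ℝ} (hb : b ∈ Set.range M.mulVec) :
    ε * ‖P *ᵥ b‖ ≤ ‖b‖ := by
  simpa only [hP.mulVec_mulVec_of_mem_range hb] using hlow _ (hP.mulVec_mem_range hM b)

theorem mul_norm_mul_mulVec_le (d : Fin p → ℝ) : ε * ‖(M * P) *ᵥ d‖ ≤ ‖M *ᵥ d‖ := by
  have h := hlow _ ⟨P *ᵥ d, mulVec_mulVec d M P⟩
  rwa [mulVec_mulVec, hP.mul_mul_self hM] at h

end IsMoorePenroseInv

theorem IsMoorePenroseInv.norm_mulVec_sub_mulVec_le {p : ℕ} {M M' P P' : Matrix (Fin p) (Fin p) ℝ}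
    {ε : ℝ} (hε : 0 < ε) (hM : M.IsSymm) (hM' : M'.IsSymm)
    (hP : IsMoorePenroseInv M P) (hP' : IsMoorePenroseInv M' P')
    (hlow : ∀ v ∈ Set.range M.mulVec, ε * ‖v‖ ≤ ‖M *ᵥ v‖)
    (hlow' : ∀ v ∈ Set.range M'.mulVec, ε * ‖v‖ ≤ ‖M' *ᵥ v‖)
    {b b' : Fin p → ℝ} (hb : b ∈ Set.range M.mulVec) (hb' : b' ∈ Set.range M'.mulVec) :
    ‖P *ᵥ b - P' *ᵥ b'‖ ≤ (p + p ^ 2) * ‖b‖ / ε ^ 2 * ‖M - M'‖ + ‖b - b'‖ / ε := by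
  set x := P *ᵥ b
  set x' := P' *ᵥ b'
  set y := P *ᵥ x
  set Q := M' * P'
  have hMx : M *ᵥ x = b := hP.mulVec_mulVec_of_mem_range hb
  have hMy : M *ᵥ y = x := hP.mulVec_mulVec_of_mem_range (hP.mulVec_mem_range hM b)
  have hx : ‖x‖ ≤ ‖b‖ / ε := (le_div_iff₀' hε).2 (hP.mul_norm_mulVec_le hM hlow hb)
  have hy : ‖y‖ ≤ ‖b‖ / ε ^ 2 := by
    have := (le_div_iff₀' hε).2 (hP.mul_norm_mulVec_le hM hlow (hP.mulVec_mem_range hM b))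
    calc ‖y‖ ≤ ‖b‖ / ε / ε := this.trans (by gcongr)
      _ = ‖b‖ / ε ^ 2 := by rw [div_div, sq]
  have hQ : ε * ‖Q *ᵥ (x - x')‖ ≤ p * ‖M - M'‖ * ‖x‖ + ‖b - b'‖ := by
    have hM'd : M' *ᵥ (x - x') = (b - b') - (M - M') *ᵥ x := by
      rw [mulVec_sub, sub_mulVec, hMx, hP'.mulVec_mulVec_of_mem_range hb']
      abel
    calc ε * ‖Q *ᵥ (x - x')‖ ≤ ‖M' *ᵥ (x - x')‖ := hP'.mul_norm_mul_mulVec_le hM' hlow' _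
      _ ≤ ‖b - b'‖ + ‖(M - M') *ᵥ x‖ := hM'd ▸ norm_sub_le _ _
      _ ≤ ‖b - b'‖ + p * ‖M - M'‖ * ‖x‖ := by
        gcongr; simpa using norm_mulVec_le_card_mul (M - M') x
      _ = _ := add_comm _ _
  have hQperp : ‖(1 - Q) *ᵥ (x - x')‖ ≤ p * (p * ‖M - M'‖ * ‖y‖) := by
    rw [← hMy, hP'.one_sub_mul_mulVec_sub hM']
    refine (hP'.norm_one_sub_mul_mulVec_le _).trans ?_
    gcongr
    simpa using norm_mulVec_le_card_mul (M - M') y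
  calc ‖x - x'‖ = ‖Q *ᵥ (x - x') + (1 - Q) *ᵥ (x - x')‖ := by
        rw [sub_mulVec, one_mulVec, add_sub_cancel]
    _ ≤ (p * ‖M - M'‖ * ‖x‖ + ‖b - b'‖) / ε + p * (p * ‖M - M'‖ * ‖y‖) :=
        (norm_add_le _ _).trans (add_le_add ((le_div_iff₀' hε).2 hQ) hQperp)
    _ ≤ (p * ‖M - M'‖ * (‖b‖ / ε) + ‖b - b'‖) / ε + p * (p * ‖M - M'‖ * (‖b‖ / ε ^ 2)) := by
        gcongr
    _ = (p + p ^ 2) * ‖b‖ / ε ^ 2 * ‖M - M'‖ + ‖b - b'‖ / ε := by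
        field_simp
        ring

theorem stmt_14_general {p : ℕ} (R : Matrix (Fin p) (Fin p) ℝ) (hR : R.PosSemidef)
    (ε c₁ c₂ : ℝ) (hε : 0 < ε) (hc₂ : 0 < c₂) :
    ∃ L : ℝ, 0 < L ∧
      ∀ (A A' PA PA' : Matrix (Fin p) (Fin p) ℝ) (b b' : Fin p → ℝ),
        A.PosSemidef → A'.PosSemidef →
        IsMoorePenroseInv (A + R) PA → IsMoorePenroseInv (A' + R) PA' →
        (∀ v : Fin p → ℝ, (∃ w, (A + R).mulVec w = v) →
            ε * ‖v‖ ≤ ‖(A + R).mulVec v‖) →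
        (∀ v : Fin p → ℝ, (∃ w, (A' + R).mulVec w = v) →
            ε * ‖v‖ ≤ ‖(A' + R).mulVec v‖) →
        ‖A‖ ≤ c₁ → ‖A'‖ ≤ c₁ → ‖b‖ ≤ c₂ → ‖b'‖ ≤ c₂ →
        (∃ w, (A + R).mulVec w = b) → (∃ w, (A' + R).mulVec w = b') →
        ‖PA.mulVec b - PA'.mulVec b'‖ ≤ L * (‖A - A'‖ + ‖b - b'‖) := by
  set K := (p + p ^ 2) * c₂ / ε ^ 2
  refine ⟨K + ε⁻¹, by positivity, ?_⟩
  intro A A' PA PA' b b' hA hA' hPA hPA' hlow hlow' _ _ hnb _ hb hb'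
  have hsymm : ∀ {B}, B.PosSemidef → (B + R).IsSymm := fun hB =>
    isHermitian_iff_isSymm.mp (hB.add hR).isHermitian
  have key := hPA.norm_mulVec_sub_mulVec_le hε (hsymm hA) (hsymm hA') hPA' hlow hlow' hb hb'
  rw [add_sub_add_right_eq_sub, div_eq_inv_mul _ ε] at key
  have hbK : (p + p ^ 2) * ‖b‖ / ε ^ 2 ≤ K := by simp only [K]; gcongr
  have := mul_nonneg (inv_nonneg.2 hε.le) (norm_nonneg (A - A'))
  have := mul_nonneg (by positivity : 0 ≤ K) (norm_nonneg (b - b'))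
  calc ‖PA *ᵥ b - PA' *ᵥ b'‖ ≤ K * ‖A - A'‖ + ε⁻¹ * ‖b - b'‖ := key.trans (by gcongr)
    _ ≤ (K + ε⁻¹) * (‖A - A'‖ + ‖b - b'‖) := by linarith

/-- on the set of pairs `(A, b)` with `A` symmetric PSD,
`b ∈ range(A+R)`, `‖A‖ ≤ c₁`, `‖b‖ ≤ c₂`, and the minimum nonzero singular
value of `A+R` bounded below by `ε` (expressed as `ε‖v‖ ≤ ‖(A+R)v‖` for `v` in
the range of `A+R`), the map `(A, b) ↦ (A+R)⁺ b` is Lipschitz, with a constant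
depending only on `ε, c₁, c₂`. -/
theorem stmt_14 {p : ℕ} (R : Matrix (Fin p) (Fin p) ℝ) (hR : R.PosSemidef)
    (ε c₁ c₂ : ℝ) (hε : 0 < ε) (hc₁ : 0 < c₁) (hc₂ : 0 < c₂) :
    ∃ L : ℝ, 0 < L ∧
      ∀ (A A' PA PA' : Matrix (Fin p) (Fin p) ℝ) (b b' : Fin p → ℝ),
        A.PosSemidef → A'.PosSemidef →
        IsMoorePenroseInv (A + R) PA → IsMoorePenroseInv (A' + R) PA' →
        (∀ v : Fin p → ℝ, (∃ w, (A + R).mulVec w = v) →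
            ε * ‖v‖ ≤ ‖(A + R).mulVec v‖) →
        (∀ v : Fin p → ℝ, (∃ w, (A' + R).mulVec w = v) →
            ε * ‖v‖ ≤ ‖(A' + R).mulVec v‖) →
        ‖A‖ ≤ c₁ → ‖A'‖ ≤ c₁ → ‖b‖ ≤ c₂ → ‖b'‖ ≤ c₂ →
        (∃ w, (A + R).mulVec w = b) → (∃ w, (A' + R).mulVec w = b') →
        ‖PA.mulVec b - PA'.mulVec b'‖ ≤ L * (‖A - A'‖ + ‖b - b'‖) :=
  stmt_14_general R hR ε c₁ c₂ hε hc₂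
end

section
/- Let (a_j) and (b_j) be sequences of nonnegative reals and c₃, c₂', g > 0 with g > c₃c₂', satisfying limsup a_j ≤ max{c₁' g^{-n} E, c₂' D, c₂' g^{-(n+1)} limsup b_j} and limsup b_j ≤ c₃ max{gⁿ limsup a_j, E}, where E, D ≥ 0, c₁' ≥ 1, and also g > c₁'. Then limsup a_j ≤ max{g^{1-n} E, c₂' D} and limsup b_j ≤ max{c₁'c₃ E, c₂'c₃ gⁿ D}. -/
open Filter

lemma stmt_19_aux (A B c₁' c₂' c₃ g E D P : ℝ)
    (hc₁' : 1 ≤ c₁') (hc₂' : 0 < c₂') (hc₃ : 0 < c₃) (hg : 0 < g)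
    (hE : 0 ≤ E) (hD : 0 ≤ D) (hP : 0 < P)
    (hgain : c₃ * c₂' < g) (hgc₁ : c₁' < g)
    (hla : A ≤ max (c₁' * P⁻¹ * E) (max (c₂' * D) (c₂' * (P * g)⁻¹ * B)))
    (hlb : B ≤ c₃ * max (P * A) E) :
    A ≤ max (g * P⁻¹ * E) (c₂' * D) ∧ B ≤ max (c₁' * c₃ * E) (c₂' * c₃ * P * D) := by
  have hg1 : 1 < g := lt_of_le_of_lt hc₁' hgc₁
  have hPi : P * P⁻¹ = 1 := mul_inv_cancel₀ hP.ne'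
  have hgi : g * g⁻¹ = 1 := mul_inv_cancel₀ hg.ne'
  have hPgi : (P * g)⁻¹ = P⁻¹ * g⁻¹ := by rw [mul_inv]
  have hPinv : 0 < P⁻¹ := inv_pos.2 hP
  have hginv : 0 < g⁻¹ := inv_pos.2 hg
  have hA : A ≤ max (g * P⁻¹ * E) (c₂' * D) := by
    rcases le_or_gt A 0 with h0 | h0
    · exact le_trans h0 (le_max_of_le_right (by positivity))
    · rcases le_total (P * A) E with h | h
      · have hB' : B ≤ c₃ * E := by rw [max_eq_right h] at hlb; exact hlb
        refine le_trans hla (max_le ?_ (max_le (le_max_right _ _) ?_))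
        · exact le_max_of_le_left
            (mul_le_mul_of_nonneg_right
              (mul_le_mul_of_nonneg_right hgc₁.le hPinv.le) hE)
        · apply le_max_of_le_left
          rw [hPgi]
          have hk : c₃ * c₂' * g⁻¹ < 1 := by
            have := mul_lt_mul_of_pos_right hgain hginv
            rwa [hgi] at this
          nlinarith [mul_le_mul_of_nonneg_left hB' (by positivity : (0:ℝ) ≤ c₂' * (P⁻¹ * g⁻¹)),
            mul_nonneg (sub_nonneg.2 hk.le) (mul_nonneg hPinv.le hE),
            mul_nonneg (sub_nonneg.2 hg1.le) (mul_nonneg hPinv.le hE)]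
      · have hB' : B ≤ c₃ * (P * A) := by rw [max_eq_left h] at hlb; exact hlb
        have hthird : c₂' * (P * g)⁻¹ * B < A := by
          rw [hPgi]
          have h1 : c₂' * (P⁻¹ * g⁻¹) * B ≤ c₂' * (P⁻¹ * g⁻¹) * (c₃ * (P * A)) :=
            mul_le_mul_of_nonneg_left hB' (by positivity)
          have h2 : c₂' * (P⁻¹ * g⁻¹) * (c₃ * (P * A)) = (c₃ * c₂' * g⁻¹) * A * (P * P⁻¹) := by
            ring
          rw [hPi, mul_one] at h2
          have h3 : c₃ * c₂' * g⁻¹ < 1 := by nlinarith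
          nlinarith
        have hkey : A ≤ max (c₁' * P⁻¹ * E) (c₂' * D) := by
          by_contra hc
          push_neg at hc
          rw [max_lt_iff] at hc
          exact absurd hla (not_le.2 (max_lt hc.1 (max_lt hc.2 hthird)))
        refine le_trans hkey (max_le ?_ (le_max_right _ _))
        exact le_max_of_le_left
          (mul_le_mul_of_nonneg_right
            (mul_le_mul_of_nonneg_right hgc₁.le hPinv.le) hE)
  refine ⟨hA, ?_⟩
  by_contra hc
  push_neg at hc
  rw [max_lt_iff] at hc
  have hBpos : 0 < B := lt_of_le_of_lt (by positivity) hc.1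
  have hPA : P * A ≤ max (c₁' * E) (max (c₂' * P * D) (c₂' * g⁻¹ * B)) := by
    refine le_trans (mul_le_mul_of_nonneg_left hla hP.le) ?_
    rw [mul_max_of_nonneg _ _ hP.le, mul_max_of_nonneg _ _ hP.le]
    refine max_le_max ?_ (max_le_max ?_ ?_)
    · rw [show P * (c₁' * P⁻¹ * E) = c₁' * E * (P * P⁻¹) from by ring, hPi, mul_one]
    · exact le_of_eq (by ring)
    · rw [hPgi, show P * (c₂' * (P⁻¹ * g⁻¹) * B) = c₂' * g⁻¹ * B * (P * P⁻¹) from by ring,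
        hPi, mul_one]
  have hmax1 : c₃ * (P * A) < B := by
    refine lt_of_le_of_lt (mul_le_mul_of_nonneg_left hPA hc₃.le) ?_
    rw [mul_max_of_nonneg _ _ hc₃.le, mul_max_of_nonneg _ _ hc₃.le]
    refine max_lt ?_ (max_lt ?_ ?_)
    · calc c₃ * (c₁' * E) = c₁' * c₃ * E := by ring
        _ < B := hc.1
    · calc c₃ * (c₂' * P * D) = c₂' * c₃ * P * D := by ring
        _ < B := hc.2
    · have h3 : c₃ * c₂' * g⁻¹ < 1 := by nlinarith
      nlinarith
  have hmax2 : c₃ * E < B := by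
    have h1 : c₃ * E ≤ c₁' * c₃ * E := by
      nlinarith [mul_nonneg (mul_nonneg (sub_nonneg.2 hc₁') hc₃.le) hE]
    exact lt_of_le_of_lt h1 hc.1
  have : c₃ * max (P * A) E < B := by
    rw [mul_max_of_nonneg _ _ hc₃.le]
    exact max_lt hmax1 hmax2
  exact absurd hlb (not_le.2 this)

/-- small-gain fixed-point argument closing the proof of
Theorem 1: combining the observer bound and the identifier ISS bound with loop
gain `c₂'c₃/g < 1` yields the decoupled asymptotic bounds. -/
theorem stmt_19 (n : ℕ) (a b : ℕ → ℝ)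
    (ha : ∀ j, 0 ≤ a j) (hb : ∀ j, 0 ≤ b j)
    (c₁' c₂' c₃ g E D : ℝ)
    (hc₁' : 1 ≤ c₁') (hc₂' : 0 < c₂') (hc₃ : 0 < c₃) (hg : 0 < g)
    (hE : 0 ≤ E) (hD : 0 ≤ D)
    (hgain : c₃ * c₂' < g) (hgc₁ : c₁' < g)
    (hla : Filter.limsup a Filter.atTop
      ≤ max (c₁' * g ^ (-(n : ℤ)) * E)
          (max (c₂' * D) (c₂' * g ^ (-((n : ℤ) + 1)) * Filter.limsup b Filter.atTop)))
    (hlb : Filter.limsup b Filter.atTop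
      ≤ c₃ * max (g ^ n * Filter.limsup a Filter.atTop) E) :
    Filter.limsup a Filter.atTop ≤ max (g ^ ((1 : ℤ) - n) * E) (c₂' * D) ∧
    Filter.limsup b Filter.atTop ≤ max (c₁' * c₃ * E) (c₂' * c₃ * g ^ n * D) := by
  have h1 : g ^ (-(n : ℤ)) = ((g ^ n : ℝ))⁻¹ := by rw [zpow_neg, zpow_natCast]
  have h2 : g ^ (-((n : ℤ) + 1)) = ((g ^ n * g : ℝ))⁻¹ := by
    rw [zpow_neg, zpow_add_one₀ hg.ne', zpow_natCast]
  have h3 : g ^ ((1 : ℤ) - n) = g * ((g ^ n : ℝ))⁻¹ := by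
    rw [sub_eq_add_neg, zpow_add₀ hg.ne', zpow_one, zpow_neg, zpow_natCast]
  rw [h1, h2] at hla
  rw [h3]
  exact stmt_19_aux _ _ _ _ _ _ _ _ _ hc₁' hc₂' hc₃ hg hE hD (pow_pos hg n)
    hgain hgc₁ hla hlb
end
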